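/- arXiv:1704.05104 — 4 statements merged into one kernel-verified Lean document; each statement's English description precedes it below -/
import Mathlib

section
/- Let H be a complex Hilbert space and let A, K be bounded linear operators on H such that A is positive and the operator AK (the composition of A and K) is self-adjoint. Then for every x in H, |⟨AKx, x⟩| ≤ ‖K‖ · ⟨Ax, x⟩ (where ⟨Ax, x⟩ is a nonnegative real number). -/
open ComplexOrder ContinuousLinearMap Filter
open scoped InnerProductSpace

/-! The form `[u, v] = ⟪A u, v⟫` is positive semi-definite and `K` is symmetric for it, so
Cauchy–Schwarz gives `|[K^m x, x]|² ≤ |[K^(2m) x, x]| · [x, x]`. Iterating along `m = 2^n` yields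
`|[K x, x]|^(2^n) · [x, x] ≤ |[K^(2^n) x, x]| · [x, x]^(2^n) ≤ ‖A‖ ‖x‖² (‖K‖ [x, x])^(2^n)`, and
taking `2^n`-th roots as `n → ∞` leaves `|[K x, x]| ≤ ‖K‖ [x, x]`. -/

theorem le_of_forall_pow_le_mul_pow {a b C : ℝ} (hb : 0 ≤ b) {e : ℕ → ℕ}
    (he : Tendsto e atTop atTop) (h : ∀ n, a ^ e n ≤ C * b ^ e n) : a ≤ b := by
  by_contra! hba
  have ha : 0 < a := hb.trans_lt hba
  obtain rfl | hb := hb.eq_or_lt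
  · obtain ⟨n, hn⟩ := (he.eventually_ge_atTop 1).exists
    have := h n
    rw [zero_pow (by omega), mul_zero] at this
    exact (pow_pos ha _).not_ge this
  · have hlim : Tendsto (fun n ↦ (a / b) ^ e n) atTop atTop :=
      (tendsto_pow_atTop_atTop_of_one_lt ((one_lt_div hb).2 hba)).comp he
    obtain ⟨n, hn⟩ := (hlim.eventually_gt_atTop C).exists
    rw [div_pow, lt_div_iff₀ (pow_pos hb _)] at hn
    linarith [h n]

theorem pow_two_pow_mul_le_of_sq_le_mul {a : ℕ → ℝ} {t : ℝ} (ha : 0 ≤ a 0) (ht : 0 < t)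
    (hsq : ∀ n, a n ^ 2 ≤ a (n + 1) * t) (n : ℕ) : a 0 ^ 2 ^ n * t ≤ a n * t ^ 2 ^ n := by
  induction n with
  | zero => simp
  | succ n ih =>
    refine le_of_mul_le_mul_right ?_ ht
    calc a 0 ^ 2 ^ (n + 1) * t * t = (a 0 ^ 2 ^ n * t) ^ 2 := by ring
      _ ≤ (a n * t ^ 2 ^ n) ^ 2 := pow_le_pow_left₀ (by positivity) ih 2
      _ = a n ^ 2 * t ^ 2 ^ (n + 1) := by ring
      _ ≤ a (n + 1) * t * t ^ 2 ^ (n + 1) := by gcongr; exact hsq n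
      _ = a (n + 1) * t ^ 2 ^ (n + 1) * t := by ring

theorem le_mul_of_sq_le_mul_succ {a : ℕ → ℝ} {t b C : ℝ} (ha : 0 ≤ a 0) (ht : 0 ≤ t)
    (hb : 0 ≤ b) (hsq : ∀ n, a n ^ 2 ≤ a (n + 1) * t) (hbound : ∀ n, a n ≤ C * b ^ 2 ^ n) :
    a 0 ≤ b * t := by
  obtain rfl | ht := ht.eq_or_lt
  · nlinarith [hsq 0]
  refine le_of_forall_pow_le_mul_pow (C := C / t) (by positivity)
    (tendsto_pow_atTop_atTop_of_one_lt one_lt_two) fun n ↦ ?_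
  rw [div_mul_eq_mul_div, le_div_iff₀ ht]
  calc a 0 ^ 2 ^ n * t ≤ a n * t ^ 2 ^ n := pow_two_pow_mul_le_of_sq_le_mul ha ht hsq n
    _ ≤ C * b ^ 2 ^ n * t ^ 2 ^ n := by gcongr; exact hbound n
    _ = C * (b * t) ^ 2 ^ n := by ring

namespace ContinuousLinearMap

theorem isPositive_of_inner_nonneg {E : Type*} [NormedAddCommGroup E] [InnerProductSpace ℂ E]
    (T : E →L[ℂ] E) (h : ∀ x, 0 ≤ ⟪T x, x⟫_ℂ) : T.IsPositive :=
  (isPositive_iff T).2 ⟨(LinearMap.isSymmetric_iff_inner_map_self_real _).2 fun x ↦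
    (IsSelfAdjoint.of_nonneg (h x)).star_eq, h⟩

variable {𝕜 E : Type*} [RCLike 𝕜] [NormedAddCommGroup E] [InnerProductSpace 𝕜 E]

theorem IsPositive.norm_inner_sq_le {T : E →L[𝕜] E} (hT : T.IsPositive) (x y : E) :
    ‖⟪T x, y⟫_𝕜‖ ^ 2 ≤ RCLike.re ⟪T x, x⟫_𝕜 * RCLike.re ⟪T y, y⟫_𝕜 := by
  let c : PreInnerProductSpace.Core 𝕜 E :=
    { inner := fun u v ↦ ⟪T u, v⟫_𝕜
      conj_inner_symm := fun u v ↦ by simp only [hT.inner_left_eq_inner_right u, inner_conj_symm]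
      re_inner_nonneg := hT.re_inner_nonneg_left
      add_left := fun u v w ↦ by simp only [map_add, inner_add_left]
      smul_left := fun u v r ↦ by simp only [map_smul, inner_smul_left] }
  have hsymm : ‖⟪T y, x⟫_𝕜‖ = ‖⟪T x, y⟫_𝕜‖ := by
    rw [hT.inner_left_eq_inner_right, ← inner_conj_symm, RCLike.norm_conj]
  have h : ‖⟪T x, y⟫_𝕜‖ * ‖⟪T y, x⟫_𝕜‖ ≤ RCLike.re ⟪T x, x⟫_𝕜 * RCLike.re ⟪T y, y⟫_𝕜 :=
    InnerProductSpace.Core.inner_mul_inner_self_le (c := c) x y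
  rwa [hsymm, ← sq] at h

theorem inner_apply_pow_right {A K : E →L[𝕜] E} (hA : A.IsSymmetric)
    (hAK : (A ∘L K).IsSymmetric) (n : ℕ) (u v : E) :
    ⟪A u, (K ^ n) v⟫_𝕜 = ⟪A ((K ^ n) u), v⟫_𝕜 := by
  induction n generalizing v with
  | zero => simp
  | succ n ih =>
    calc ⟪A u, (K ^ (n + 1)) v⟫_𝕜 = ⟪A ((K ^ n) u), K v⟫_𝕜 := by
          rw [pow_succ, mul_apply_eq_comp, ih]
      _ = ⟪(K ^ n) u, A (K v)⟫_𝕜 := hA _ _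
      _ = ⟪A (K ((K ^ n) u)), v⟫_𝕜 := (hAK _ _).symm
      _ = ⟪A ((K ^ (n + 1)) u), v⟫_𝕜 := by rw [pow_succ', mul_apply_eq_comp]

theorem norm_inner_pow_sq_le {A K : E →L[𝕜] E} (hA : A.IsPositive)
    (hAK : (A ∘L K).IsSymmetric) (m : ℕ) (x : E) :
    ‖⟪A ((K ^ m) x), x⟫_𝕜‖ ^ 2 ≤ ‖⟪A ((K ^ (2 * m)) x), x⟫_𝕜‖ * RCLike.re ⟪A x, x⟫_𝕜 := by
  calc ‖⟪A ((K ^ m) x), x⟫_𝕜‖ ^ 2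
      ≤ RCLike.re ⟪A ((K ^ m) x), (K ^ m) x⟫_𝕜 * RCLike.re ⟪A x, x⟫_𝕜 := hA.norm_inner_sq_le _ _
    _ = RCLike.re ⟪A ((K ^ (2 * m)) x), x⟫_𝕜 * RCLike.re ⟪A x, x⟫_𝕜 := by
      rw [inner_apply_pow_right hA.isSymmetric hAK, ← mul_apply_eq_comp (K ^ m), ← pow_add,
        ← two_mul]
    _ ≤ ‖⟪A ((K ^ (2 * m)) x), x⟫_𝕜‖ * RCLike.re ⟪A x, x⟫_𝕜 := by
      gcongr
      · exact hA.re_inner_nonneg_left x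
      · exact RCLike.re_le_norm _

theorem norm_pow_apply_le (K : E →L[𝕜] E) (m : ℕ) (x : E) : ‖(K ^ m) x‖ ≤ ‖K‖ ^ m * ‖x‖ := by
  induction m with
  | zero => simp
  | succ m ih =>
    rw [pow_succ' K, mul_apply_eq_comp, pow_succ' ‖K‖, mul_assoc]
    exact K.le_opNorm_of_le ih

theorem norm_inner_pow_le (A K : E →L[𝕜] E) (m : ℕ) (x : E) :
    ‖⟪A ((K ^ m) x), x⟫_𝕜‖ ≤ ‖A‖ * ‖x‖ ^ 2 * ‖K‖ ^ m :=
  calc ‖⟪A ((K ^ m) x), x⟫_𝕜‖ ≤ ‖A ((K ^ m) x)‖ * ‖x‖ := norm_inner_le_norm _ _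
    _ ≤ ‖A‖ * (‖K‖ ^ m * ‖x‖) * ‖x‖ := by
      gcongr
      exact A.le_opNorm_of_le (norm_pow_apply_le K m x)
    _ = ‖A‖ * ‖x‖ ^ 2 * ‖K‖ ^ m := by ring

end ContinuousLinearMap

/-- **Reid's inequality** (classical form): if `A` is a positive bounded operator on a
complex Hilbert space `H` and `A ∘ K` is self-adjoint, then
`|⟨AKx, x⟩| ≤ ‖K‖ · ⟨Ax, x⟩` for every `x ∈ H`. -/
theorem reid_inequality
    {H : Type*} [NormedAddCommGroup H] [InnerProductSpace ℂ H] [CompleteSpace H]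
    (A K : H →L[ℂ] H)
    (hA : ∀ x : H, 0 ≤ (inner ℂ (A x) x : ℂ))
    (hAK : IsSelfAdjoint (A ∘L K)) :
    ∀ x : H, ‖(inner ℂ ((A ∘L K) x) x : ℂ)‖ ≤ ‖K‖ * (inner ℂ (A x) x : ℂ).re := by
  intro x
  have hApos : A.IsPositive := isPositive_of_inner_nonneg A hA
  simpa only [pow_zero, pow_one, comp_apply, RCLike.re_to_complex] using
    le_mul_of_sq_le_mul_succ (a := fun n ↦ ‖⟪A ((K ^ 2 ^ n) x), x⟫_ℂ‖)
      (norm_nonneg _) (hApos.re_inner_nonneg_left x) (norm_nonneg K)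
      (fun n ↦ by
        simpa only [pow_succ' 2 n] using norm_inner_pow_sq_le hApos hAK.isSymmetric (2 ^ n) x)
      (fun n ↦ norm_inner_pow_le A K (2 ^ n) x)
end

section
/- Let H be a complex Hilbert space and let A, K be bounded linear operators on H such that A is positive and the operator AK (the composition of A and K) is normal. Then for every x in H, |⟨AKx, x⟩| ≤ ‖K‖ · ⟨Ax, x⟩. -/
/-!
Write `T = AK`. Normality gives `|T|² = T*T = TT* = A K K* A ≤ ‖K‖² A²`, and since the square
root is operator monotone, `|T| ≤ ‖K‖ A`. For a normal operator the functional calculus gives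
`Re (c T) ≤ |c T| = |T|` for every unimodular `c`; choosing the phase `c` with
`⟨c T x, x⟩ = |⟨T x, x⟩|` yields `|⟨T x, x⟩| ≤ ⟨|T| x, x⟩ ≤ ‖K‖ ⟨A x, x⟩`.
-/

open ComplexOrder ContinuousLinearMap
open scoped InnerProductSpace

section CStarAlgebra

variable {A : Type*} [CStarAlgebra A] [PartialOrder A] [StarOrderedRing A]

lemma IsSelfAdjoint.mul_mul_star_le_sq {a : A} (ha : IsSelfAdjoint a) (k : A) :
    a * k * star (a * k) ≤ (‖k‖ • a) ^ 2 :=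
  calc a * k * star (a * k) = a * (k * star k) * a := by
        rw [star_mul, ha.star_eq]; noncomm_ring
    _ ≤ a * algebraMap ℝ A (‖k‖ ^ 2) * a :=
      ha.conjugate_le_conjugate CStarAlgebra.mul_star_le_algebraMap_norm_sq
    _ = (‖k‖ • a) ^ 2 := by
      simp only [Algebra.algebraMap_eq_smul_one, sq, mul_smul_comm, smul_mul_assoc, mul_one,
        smul_smul]

namespace CFC

lemma abs_le_of_star_mul_self_le_sq {a b : A} (hb : 0 ≤ b) (h : star a * a ≤ b ^ 2) :
    abs a ≤ b := by
  rw [← sqrt_sq b hb]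
  exact sqrt_le_sqrt _ _ h

lemma add_star_le_two_smul_abs (a : A) [IsStarNormal a] : a + star a ≤ (2 : ℝ) • abs a := by
  rw [abs_eq_cfcₙ_coe_norm ℂ a, cfcₙ_eq_cfc]
  conv_lhs => rw [← cfc_id' ℂ a, ← cfc_star, ← cfc_add ..]
  rw [← cfc_smul ..]
  refine cfc_mono fun z _ => ?_
  change z + star z ≤ (2 : ℝ) • (‖z‖ : ℂ)
  rw [RCLike.star_def, Complex.add_conj, Complex.real_smul, ← Complex.ofReal_mul,
    Complex.real_le_real]
  exact mul_le_mul_of_nonneg_left (Complex.re_le_norm z) zero_le_two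

end CFC

end CStarAlgebra

namespace ContinuousLinearMap

section RCLike

variable {𝕜 E : Type*} [RCLike 𝕜] [NormedAddCommGroup E] [InnerProductSpace 𝕜 E]

lemma re_inner_le_re_inner_of_le {f g : E →L[𝕜] E} (h : f ≤ g) (x : E) :
    RCLike.re ⟪f x, x⟫_𝕜 ≤ RCLike.re ⟪g x, x⟫_𝕜 := by
  simpa [inner_sub_left] using h.re_inner_nonneg_left x

lemma re_inner_star_apply_self [CompleteSpace E] (f : E →L[𝕜] E) (x : E) :
    RCLike.re ⟪star f x, x⟫_𝕜 = RCLike.re ⟪f x, x⟫_𝕜 := by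
  rw [star_eq_adjoint, adjoint_inner_left, inner_re_symm]

end RCLike

variable {E : Type*} [NormedAddCommGroup E] [InnerProductSpace ℂ E]

lemma isPositive_iff_forall_inner_nonneg_complex (T : E →L[ℂ] E) :
    T.IsPositive ↔ ∀ x, 0 ≤ ⟪T x, x⟫_ℂ := by
  refine ⟨fun hT => hT.inner_nonneg_left, fun h => T.isPositive_iff.mpr ⟨?_, h⟩⟩
  refine (LinearMap.isSymmetric_iff_inner_map_self_real _).mpr fun x => ?_
  exact Complex.conj_eq_iff_im.mpr (Complex.nonneg_iff.mp (h x)).2.symm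

lemma norm_inner_apply_self_le_re_inner_abs [CompleteSpace E] (T : E →L[ℂ] E) [IsStarNormal T]
    (x : E) : ‖⟪T x, x⟫_ℂ‖ ≤ (⟪CFC.abs T x, x⟫_ℂ).re := by
  set w := ⟪T x, x⟫_ℂ
  set c : ℂ := Complex.exp (w.arg * Complex.I)
  have hc : ‖c‖ = 1 := Complex.norm_exp_ofReal_mul_I _
  have hcw : ⟪(c • T) x, x⟫_ℂ = ‖w‖ :=
    calc ⟪(c • T) x, x⟫_ℂ = starRingEnd ℂ c * (‖w‖ * c) := by
          rw [smul_apply, inner_smul_left, Complex.norm_mul_exp_arg_mul_I w]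
      _ = ‖w‖ := by rw [mul_left_comm, Complex.conj_mul', hc]; simp
  have key := re_inner_le_re_inner_of_le (CFC.add_star_le_two_smul_abs (c • T)) x
  rw [CFC.abs_smul, hc, one_smul, add_apply, inner_add_left, map_add,
    re_inner_star_apply_self, hcw, smul_apply] at key
  simp only [RCLike.re_to_complex, Complex.ofReal_re, CStarModule.inner_smul_left_real,
    Complex.real_smul, Complex.ofReal_ofNat, Complex.mul_re, Complex.re_ofNat, Complex.im_ofNat,
    zero_mul, sub_zero] at key
  linarith

end ContinuousLinearMap

/-- **Reid's inequality for normal products**: if `A` is a positive bounded operator on a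
complex Hilbert space `H` and `A ∘ K` is normal (it commutes with its adjoint), then
`|⟨AKx, x⟩| ≤ ‖K‖ · ⟨Ax, x⟩` for every `x ∈ H`. -/
theorem reid_inequality_normal
    {H : Type*} [NormedAddCommGroup H] [InnerProductSpace ℂ H] [CompleteSpace H]
    (A K : H →L[ℂ] H)
    (hA : ∀ x : H, 0 ≤ (inner ℂ (A x) x : ℂ))
    (hAK : (A ∘L K) ∘L adjoint (A ∘L K) = adjoint (A ∘L K) ∘L (A ∘L K)) :
    ∀ x : H, ‖(inner ℂ ((A ∘L K) x) x : ℂ)‖ ≤ ‖K‖ * (inner ℂ (A x) x : ℂ).re := by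
  have hA0 : 0 ≤ A :=
    (nonneg_iff_isPositive A).mpr ((isPositive_iff_forall_inner_nonneg_complex A).mpr hA)
  have : IsStarNormal (A * K) := ⟨hAK.symm⟩
  have habs : CFC.abs (A * K) ≤ ‖K‖ • A := by
    refine CFC.abs_le_of_star_mul_self_le_sq (smul_nonneg (norm_nonneg K) hA0) ?_
    rw [star_comm_self']
    exact hA0.isSelfAdjoint.mul_mul_star_le_sq K
  intro x
  calc ‖⟪(A * K) x, x⟫_ℂ‖ ≤ (⟪CFC.abs (A * K) x, x⟫_ℂ).re :=
        norm_inner_apply_self_le_re_inner_abs (A * K) x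
    _ ≤ (⟪(‖K‖ • A) x, x⟫_ℂ).re := re_inner_le_re_inner_of_le habs x
    _ = ‖K‖ * (⟪A x, x⟫_ℂ).re := by simp
end

section
/- Let H be a complex Hilbert space and let T be a hyponormal bounded linear operator on H. Then for every x in H, |⟨Tx, x⟩| ≤ ⟨|T|x, x⟩, where |T| denotes the absolute value of T. -/
/-! With `Bε = B + ε` invertible and positive, `T = (T Bε⁻¹) Bε`, so the Cauchy–Schwarz inequality
for the positive form `⟪Bε ·, ·⟫` gives `|⟪T x, x⟫|² ≤ ⟪Bε x, x⟫ ⟪D x, x⟫` with `D = T Bε⁻¹ T*`.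
Hyponormality makes `D² = T (Bε⁻¹ B² Bε⁻¹) T* ≤ T T* ≤ T* T = B²`, so `D ≤ B` because the square
root is operator monotone. Letting `ε → 0` gives `|⟪T x, x⟫|² ≤ ⟪B x, x⟫²`. -/

open ComplexOrder ContinuousLinearMap Filter Topology

section CStarAlgebra

variable {A : Type*} [CStarAlgebra A] [PartialOrder A] [StarOrderedRing A]

theorem CStarAlgebra.le_of_mul_self_le_mul_self {a b : A} (ha : 0 ≤ a) (hb : 0 ≤ b)
    (h : a * a ≤ b * b) : a ≤ b := by
  simpa only [CFC.sqrt_mul_self a ha, CFC.sqrt_mul_self b hb] using CFC.sqrt_le_sqrt _ _ h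

theorem CStarAlgebra.mul_self_le_mul_self_add_algebraMap {b : A} (hb : 0 ≤ b) {ε : ℝ}
    (hε : 0 ≤ ε) :
    b * b ≤ (b + algebraMap ℝ A ε) * (b + algebraMap ℝ A ε) := by
  have hexpand : (b + algebraMap ℝ A ε) * (b + algebraMap ℝ A ε)
      = b * b + (ε • b + ε • (b + algebraMap ℝ A ε)) := by
    simp only [Algebra.algebraMap_eq_smul_one, mul_add, add_mul, smul_mul_assoc, mul_smul_comm,
      mul_one, one_mul, smul_smul, smul_add]
    abel
  rw [hexpand]
  exact le_add_of_nonneg_right <| add_nonneg (smul_nonneg hε hb)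
    (smul_nonneg hε (add_nonneg hb (algebraMap_nonneg A hε)))

theorem CStarAlgebra.mul_inv_mul_star_le_of_hyponormal {t b : A} {u : Aˣ} (hb : 0 ≤ b)
    (hu : 0 ≤ (u : A)) (hbu : b * b ≤ u * u) (ht : t * star t ≤ star t * t)
    (htb : star t * t = b * b) :
    t * ↑u⁻¹ * star t ≤ b := by
  have hv : 0 ≤ (↑u⁻¹ : A) := CFC.inv_nonneg_of_nonneg u hu
  have hd : 0 ≤ t * ↑u⁻¹ * star t := by simpa using star_left_conjugate_nonneg hv (star t)
  refine le_of_mul_self_le_mul_self hd hb ?_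
  calc t * ↑u⁻¹ * star t * (t * ↑u⁻¹ * star t)
        = t * (↑u⁻¹ * (b * b) * ↑u⁻¹) * star t := by rw [← htb]; noncomm_ring
    _ ≤ t * (↑u⁻¹ * (↑u * ↑u) * ↑u⁻¹) * star t :=
        star_right_conjugate_le_conjugate (conjugate_le_conjugate_of_nonneg hbu hv) t
    _ = t * star t := by simp
    _ ≤ b * b := htb ▸ ht

end CStarAlgebra

namespace ContinuousLinearMap

variable {H : Type*} [NormedAddCommGroup H] [InnerProductSpace ℂ H]

theorem nonneg_of_forall_inner_nonneg {S : H →L[ℂ] H} (h : ∀ x, 0 ≤ inner ℂ (S x) x) :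
    0 ≤ S := by
  rw [nonneg_iff_isPositive, isPositive_iff]
  exact ⟨(LinearMap.isSymmetric_iff_inner_map_self_real _).2 fun x ↦
    (IsSelfAdjoint.of_nonneg (h x)).star_eq, h⟩

theorem re_inner_le_re_inner_of_le_s3 {S₁ S₂ : H →L[ℂ] H} (h : S₁ ≤ S₂) (x : H) :
    (inner ℂ (S₁ x) x).re ≤ (inner ℂ (S₂ x) x).re := by
  simpa [inner_sub_left] using h.re_inner_nonneg_left x

variable [CompleteSpace H]

theorem norm_inner_sq_le_of_nonneg {P : H →L[ℂ] H} (hP : 0 ≤ P) (x y : H) :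
    ‖inner ℂ (P x) y‖ ^ 2 ≤ (inner ℂ (P x) x).re * (inner ℂ (P y) y).re := by
  set S := CFC.sqrt P
  have hS : IsSelfAdjoint S := .of_nonneg (CFC.sqrt_nonneg P)
  have hSS : ∀ z w, inner ℂ (P z) w = inner ℂ (S z) (S w) := fun z w ↦ by
    rw [← CFC.sqrt_mul_sqrt_self P hP, mul_apply_eq_comp]
    exact hS.isSymmetric (S z) w
  have hnorm : ∀ z, (inner ℂ (P z) z).re = ‖S z‖ ^ 2 := fun z ↦ by
    rw [hSS, ← RCLike.re_to_complex, inner_self_eq_norm_sq]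
  rw [hSS, hnorm, hnorm, ← mul_pow]
  gcongr
  exact norm_inner_le_norm _ _

theorem norm_inner_mul_sq_le {P : H →L[ℂ] H} (hP : 0 ≤ P) (W : H →L[ℂ] H) (x : H) :
    ‖inner ℂ ((W * P) x) x‖ ^ 2 ≤ (inner ℂ (P x) x).re * (inner ℂ ((W * P * star W) x) x).re := by
  simp only [mul_apply_eq_comp, star_eq_adjoint, ← adjoint_inner_right W]
  exact norm_inner_sq_le_of_nonneg hP x (adjoint W x)

theorem norm_inner_self_sq_le_of_hyponormal {T B : H →L[ℂ] H} (hB : 0 ≤ B)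
    (hT : T * star T ≤ star T * T) (hTB : star T * T = B * B) {ε : ℝ} (hε : 0 < ε) (x : H) :
    ‖inner ℂ (T x) x‖ ^ 2 ≤ ((inner ℂ (B x) x).re + ε * ‖x‖ ^ 2) * (inner ℂ (B x) x).re := by
  have hBε : IsStrictlyPositive (B + algebraMap ℝ _ ε) :=
    IsStrictlyPositive.nonneg_add hB (isStrictlyPositive_algebraMap hε)
  obtain ⟨u, hu⟩ := hBε.isUnit
  have hu0 : 0 ≤ (u : H →L[ℂ] H) := hu ▸ hBε.nonneg
  have hv : IsSelfAdjoint (↑u⁻¹ : H →L[ℂ] H) := .of_nonneg (CFC.inv_nonneg_of_nonneg u hu0)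
  have hTu : T = T * ↑u⁻¹ * u := by simp [mul_assoc]
  have hTuT : T * ↑u⁻¹ * u * star (T * ↑u⁻¹) = T * ↑u⁻¹ * star T := by
    rw [star_mul, hv.star_eq]; simp [mul_assoc]
  have hreu : (inner ℂ ((u : H →L[ℂ] H) x) x).re = (inner ℂ (B x) x).re + ε * ‖x‖ ^ 2 := by
    simp [hu, Algebra.algebraMap_eq_smul_one, ← Complex.ofReal_pow]
  have hle := re_inner_le_re_inner_of_le_s3 (CStarAlgebra.mul_inv_mul_star_le_of_hyponormal hB hu0
    (hu ▸ CStarAlgebra.mul_self_le_mul_self_add_algebraMap hB hε.le) hT hTB) x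
  calc ‖inner ℂ (T x) x‖ ^ 2
      ≤ (inner ℂ ((u : H →L[ℂ] H) x) x).re * (inner ℂ ((T * ↑u⁻¹ * star T) x) x).re := by
        have h := norm_inner_mul_sq_le hu0 (T * ↑u⁻¹) x
        rwa [hTuT, ← hTu] at h
    _ ≤ (inner ℂ ((u : H →L[ℂ] H) x) x).re * (inner ℂ (B x) x).re :=
        mul_le_mul_of_nonneg_left hle
          (((nonneg_iff_isPositive _).1 hu0).re_inner_nonneg_left x)
    _ = ((inner ℂ (B x) x).re + ε * ‖x‖ ^ 2) * (inner ℂ (B x) x).re := by rw [hreu]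

end ContinuousLinearMap

/-- If `T` is a hyponormal bounded operator on a complex Hilbert space (`T T* ≤ T* T`),
then `|⟨Tx, x⟩| ≤ ⟨|T|x, x⟩` for every `x`, where `|T|` (here called `B`) is the unique
positive square root of `T* T`. -/
theorem abs_inner_le_of_hyponormal
    {H : Type*} [NormedAddCommGroup H] [InnerProductSpace ℂ H] [CompleteSpace H]
    (T : H →L[ℂ] H)
    (hT : ∀ x : H, 0 ≤ (inner ℂ ((adjoint T ∘L T - T ∘L adjoint T) x) x : ℂ))
    (B : H →L[ℂ] H)
    (hB : ∀ x : H, 0 ≤ (inner ℂ (B x) x : ℂ))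
    (hB2 : B ∘L B = adjoint T ∘L T) :
    ∀ x : H, ‖(inner ℂ (T x) x : ℂ)‖ ≤ (inner ℂ (B x) x : ℂ).re := by
  intro x
  have hTT : T * star T ≤ star T * T := sub_nonneg.1 (nonneg_of_forall_inner_nonneg hT)
  have hTB : star T * T = B * B := hB2.symm
  set c := (inner ℂ (B x) x).re
  have hc : 0 ≤ c := (Complex.nonneg_iff.1 (hB x)).1
  have hlim : Tendsto (fun ε : ℝ ↦ (c + ε * ‖x‖ ^ 2) * c) (𝓝[>] 0) (𝓝 (c ^ 2)) :=
    tendsto_nhdsWithin_of_tendsto_nhds <|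
      (by fun_prop : Continuous fun ε : ℝ ↦ (c + ε * ‖x‖ ^ 2) * c).tendsto' 0 _ (by ring)
  refine (sq_le_sq₀ (norm_nonneg _) hc).1 (ge_of_tendsto hlim ?_)
  exact eventually_nhdsWithin_of_forall fun ε hε ↦
    norm_inner_self_sq_le_of_hyponormal (nonneg_of_forall_inner_nonneg hB) hTT hTB hε x
end

section
/- Let S be the unilateral (right) shift operator on ℓ²(ℕ) (the operator sending (x₀, x₁, x₂, …) to (0, x₀, x₁, …)), and set A = SS* and K = S. Then A is positive, AK = S is hyponormal, ‖K‖ = 1, and the Reid inequality fails: there exists x ∈ ℓ²(ℕ) with |⟨AKx, x⟩| > ‖K‖ · ⟨Ax, x⟩; in fact for x = (2, 1, 0, 0, …) one has |⟨Sx, x⟩| = 2 while ⟨SS*x, x⟩ = ‖S*x‖² = 1. -/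
/-!
The shift is an isometry, `S* S = 1`, and everything but the counterexample follows from this
alone: `S S*` is then a self-adjoint idempotent, so both `A = S S*` and
`S* S - S S* = 1 - S S*` are positive, `A K = S (S* S) = S`, and `‖S‖² = ‖S* S‖ = 1` by the
C*-identity. For `x = 2 e₀ + e₁` we get `S* x = e₀`, so `⟨A x, x⟩ = ‖S* x‖² = 1`, while
`⟨S x, x⟩ = ⟨2 e₁ + e₂, 2 e₀ + e₁⟩ = 2`.
-/

open ComplexOrder ContinuousLinearMap

theorem IsStarProjection.mul_star_of_star_mul_eq_one {R : Type*} [Monoid R] [StarMul R] {a : R}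
    (h : star a * a = 1) : IsStarProjection (a * star a) where
  isIdempotentElem := by rw [IsIdempotentElem, mul_assoc, ← mul_assoc (star a), h, one_mul]
  isSelfAdjoint := .mul_star_self a

theorem CStarRing.norm_eq_one_of_star_mul_eq_one {A : Type*} [NormedRing A] [StarRing A]
    [CStarRing A] [Nontrivial A] {a : A} (h : star a * a = 1) : ‖a‖ = 1 := by
  have : ‖a‖ * ‖a‖ = 1 := by rw [← CStarRing.norm_star_mul_self, h, CStarRing.norm_one]
  nlinarith [norm_nonneg a]

namespace ContinuousLinearMap

variable {𝕜 E : Type*} [RCLike 𝕜] [NormedAddCommGroup E] [InnerProductSpace 𝕜 E] [CompleteSpace E]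

theorem inner_self_comp_adjoint_apply_self (T : E →L[𝕜] E) (x : E) :
    inner 𝕜 ((T ∘L adjoint T) x) x = (‖adjoint T x‖ : 𝕜) ^ 2 := by
  rw [comp_apply, ← adjoint_inner_right, inner_self_eq_norm_sq_to_K]

variable {S : E →L[𝕜] E}

theorem isPositive_adjoint_comp_self_sub_self_comp_adjoint (h : adjoint S ∘L S = 1) :
    (adjoint S ∘L S - S ∘L adjoint S).IsPositive := by
  rw [h]
  exact .of_isStarProjection (IsStarProjection.mul_star_of_star_mul_eq_one h).one_sub

theorem norm_eq_one_of_adjoint_comp_self_eq_one [Nontrivial E] (h : adjoint S ∘L S = 1) :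
    ‖S‖ = 1 :=
  CStarRing.norm_eq_one_of_star_mul_eq_one h

end ContinuousLinearMap

namespace lp

variable {𝕜 : Type*} [RCLike 𝕜]

structure IsUnilateralShift (S : lp (fun _ : ℕ => 𝕜) 2 →L[𝕜] lp (fun _ : ℕ => 𝕜) 2) : Prop where
  apply_zero : ∀ x, S x 0 = 0
  apply_succ : ∀ x n, S x (n + 1) = x n

variable {S : lp (fun _ : ℕ => 𝕜) 2 →L[𝕜] lp (fun _ : ℕ => 𝕜) 2}

namespace IsUnilateralShift

theorem adjoint_comp_self_eq_one (hS : IsUnilateralShift S) : adjoint S ∘L S = 1 := by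
  refine S.inner_map_map_iff_adjoint_comp_self.mp fun x y => ?_
  have hsum : Summable fun i => (inner 𝕜 (S x i) (S y i) : 𝕜) := lp.summable_inner (S x) (S y)
  rw [lp.inner_eq_tsum, lp.inner_eq_tsum, hsum.tsum_eq_zero_add]
  simp [hS.apply_zero, hS.apply_succ]

theorem apply_single (hS : IsUnilateralShift S) (n : ℕ) (c : 𝕜) :
    S (lp.single 2 n c) = lp.single 2 (n + 1) c := by
  ext (_ | m)
  · simp [hS.apply_zero, lp.single_apply]
  · by_cases h : m = n <;> simp [hS.apply_succ, lp.single_apply, h]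

theorem adjoint_apply_single_zero (hS : IsUnilateralShift S) (c : 𝕜) :
    adjoint S (lp.single 2 0 c) = 0 :=
  ext_inner_right 𝕜 fun y => by
    rw [adjoint_inner_left, lp.inner_single_left, hS.apply_zero, inner_zero_left,
      inner_zero_right]

theorem adjoint_apply_single_succ (hS : IsUnilateralShift S) (n : ℕ) (c : 𝕜) :
    adjoint S (lp.single 2 (n + 1) c) = lp.single 2 n c :=
  ext_inner_right 𝕜 fun y => by
    rw [adjoint_inner_left, lp.inner_single_left, hS.apply_succ, lp.inner_single_left]

theorem inner_apply_single_zero_add_single_one (hS : IsUnilateralShift S) (a b : 𝕜) :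
    inner 𝕜 (S (lp.single 2 0 a + lp.single 2 1 b)) (lp.single 2 0 a + lp.single 2 1 b) =
      (starRingEnd 𝕜) a * b := by
  rw [map_add, hS.apply_single, hS.apply_single, inner_add_left, lp.inner_single_left,
    lp.inner_single_left]
  simp [lp.single_apply, mul_comm]

theorem adjoint_apply_single_zero_add_single_one (hS : IsUnilateralShift S) (a b : 𝕜) :
    adjoint S (lp.single 2 0 a + lp.single 2 1 b) = lp.single 2 0 b := by
  rw [map_add, hS.adjoint_apply_single_zero, hS.adjoint_apply_single_succ, zero_add]

end IsUnilateralShift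

end lp

/-- The unilateral right shift `S` on `ℓ²(ℕ)` (sending `(x₀, x₁, …)` to `(0, x₀, x₁, …)`),
with `A = S S*` and `K = S`, gives: `A` is positive, `AK = S`, `S` is hyponormal,
`‖K‖ = 1`, yet Reid's inequality fails: for `x = (2, 1, 0, 0, …)` one has
`|⟨Sx, x⟩| = 2` while `⟨SS*x, x⟩ = ‖S*x‖² = 1`; in particular there is an `x` with
`|⟨AKx, x⟩| > ‖K‖ · ⟨Ax, x⟩`. -/
theorem reid_fails_for_hyponormal_shift
    (S : lp (fun _ : ℕ => ℂ) 2 →L[ℂ] lp (fun _ : ℕ => ℂ) 2)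
    (hS0 : ∀ x : lp (fun _ : ℕ => ℂ) 2, S x 0 = 0)
    (hSsucc : ∀ (x : lp (fun _ : ℕ => ℂ) 2) (n : ℕ), S x (n + 1) = x n) :
    (∀ x : lp (fun _ : ℕ => ℂ) 2, 0 ≤ (inner ℂ ((S ∘L adjoint S) x) x : ℂ)) ∧
    (S ∘L adjoint S) ∘L S = S ∧
    (∀ x : lp (fun _ : ℕ => ℂ) 2,
      0 ≤ (inner ℂ ((adjoint S ∘L S - S ∘L adjoint S) x) x : ℂ)) ∧
    ‖S‖ = 1 ∧
    (∀ x₀ : lp (fun _ : ℕ => ℂ) 2,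
      x₀ = lp.single 2 0 (2 : ℂ) + lp.single 2 1 (1 : ℂ) →
      ‖(inner ℂ (S x₀) x₀ : ℂ)‖ = 2 ∧
      (inner ℂ ((S ∘L adjoint S) x₀) x₀ : ℂ) = 1 ∧
      ‖adjoint S x₀‖ ^ 2 = 1) ∧
    ∃ x : lp (fun _ : ℕ => ℂ) 2,
      ‖(inner ℂ (((S ∘L adjoint S) ∘L S) x) x : ℂ)‖ >
        ‖S‖ * (inner ℂ ((S ∘L adjoint S) x) x : ℂ).re := by
  have hS : lp.IsUnilateralShift S := ⟨hS0, hSsucc⟩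
  have hiso : adjoint S ∘L S = 1 := hS.adjoint_comp_self_eq_one
  have hAK : (S ∘L adjoint S) ∘L S = S := by rw [comp_assoc, hiso, one_def, comp_id]
  have hnorm_single (n : ℕ) : ‖(lp.single 2 n 1 : lp (fun _ : ℕ => ℂ) 2)‖ = 1 := by
    rw [lp.norm_single two_pos, norm_one]
  have : Nontrivial (lp (fun _ : ℕ => ℂ) 2) :=
    nontrivial_of_ne _ 0 (norm_pos_iff.mp ((hnorm_single 0).symm ▸ one_pos))
  have hnorm : ‖S‖ = 1 := norm_eq_one_of_adjoint_comp_self_eq_one hiso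
  have hx₀ : ∀ x₀ : lp (fun _ : ℕ => ℂ) 2,
      x₀ = lp.single 2 0 (2 : ℂ) + lp.single 2 1 (1 : ℂ) →
      ‖(inner ℂ (S x₀) x₀ : ℂ)‖ = 2 ∧
      (inner ℂ ((S ∘L adjoint S) x₀) x₀ : ℂ) = 1 ∧
      ‖adjoint S x₀‖ ^ 2 = 1 := by
    rintro _ rfl
    have hadj : ‖adjoint S (lp.single 2 0 (2 : ℂ) + lp.single 2 1 (1 : ℂ))‖ = 1 := by
      rw [hS.adjoint_apply_single_zero_add_single_one, hnorm_single]
    refine ⟨?_, ?_, by rw [hadj, one_pow]⟩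
    · rw [hS.inner_apply_single_zero_add_single_one]
      norm_num
    · rw [inner_self_comp_adjoint_apply_self, hadj]
      norm_num
  refine ⟨(isPositive_self_comp_adjoint S).inner_nonneg_left, hAK,
    (isPositive_adjoint_comp_self_sub_self_comp_adjoint hiso).inner_nonneg_left, hnorm, hx₀,
    lp.single 2 0 2 + lp.single 2 1 1, ?_⟩
  obtain ⟨h2, h1, -⟩ := hx₀ _ rfl
  rw [hAK, h2, hnorm, h1]
  norm_num
end
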